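/- Minimal extrapolation is not additive: there exist μ_1, μ_2 ∈ M(𝕋), a finite subset Λ ⊂ ℤ, and minimal extrapolations ν_1 ∈ 𝓔(μ_1, Λ) and ν_2 ∈ 𝓔(μ_2, Λ), such that ν_1 + ν_2 ∉ 𝓔(μ_1 + μ_2, Λ). (For example, μ_1 = δ_0 + δ_{1/2}, μ_2 = −δ_0 − δ_{1/2}, Λ = {−1, 0, 1}, ν_1 = δ_0 + δ_{1/2}, ν_2 = −δ_{1/4} − δ_{3/4}.) -/

import Mathlib

/- Setting: `M(𝕋^d)`, the space of complex bounded Radon measures on the `d`-dimensional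
torus, is identified with the continuous dual of `C(𝕋^d, ℂ)` via the Riesz representation
theorem; the total variation norm corresponds to the operator norm. -/

open MeasureTheory Complex Real

noncomputable section

theorem Real.fact_zero_lt_one : Fact ((0 : ℝ) < 1) := ⟨one_pos⟩

attribute [local instance] Real.fact_zero_lt_one

/-- The `d`-dimensional torus `𝕋^d = (ℝ/ℤ)^d`. -/
abbrev Torus (d : ℕ) : Type := Fin d → AddCircle (1 : ℝ)

/-- The character `x ↦ e^{2πi m·x}` on the torus, for `m ∈ ℤ^d`. -/
def torusChar {d : ℕ} (m : Fin d → ℤ) : C(Torus d, ℂ) :=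
  ⟨fun x => ∏ i, fourier (m i) (x i), by
    refine continuous_finset_prod _ fun i _ => ?_
    exact (map_continuous (fourier (m i))).comp (continuous_apply i)⟩

/-- The space `M(𝕋^d)` of complex bounded Radon measures on the torus, identified (via the
Riesz representation theorem) with the continuous dual of `C(𝕋^d, ℂ)`; the total variation
norm is the operator norm. -/
abbrev TorusMeasure (d : ℕ) : Type := C(Torus d, ℂ) →L[ℂ] ℂ

/-- The Fourier coefficient `μ̂(m) = ∫_{𝕋^d} e^{-2πi m·x} dμ(x)`. -/
def mFourierCoeff {d : ℕ} (μ : TorusMeasure d) (m : Fin d → ℤ) : ℂ :=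
  μ (torusChar (-m))

/-- `ν` is an extrapolation of `μ` from `Λ` if `ν̂ = μ̂` on `Λ`. -/
def IsExtrapolation {d : ℕ} (μ : TorusMeasure d) (Λ : Finset (Fin d → ℤ))
    (ν : TorusMeasure d) : Prop :=
  ∀ m ∈ Λ, mFourierCoeff ν m = mFourierCoeff μ m

/-- `ε(μ,Λ) = inf {‖σ‖ : σ ∈ M(𝕋^d), σ̂ = μ̂ on Λ}`. -/
def minExtNorm {d : ℕ} (μ : TorusMeasure d) (Λ : Finset (Fin d → ℤ)) : ℝ :=
  sInf ((fun ν => ‖ν‖) '' {ν | IsExtrapolation μ Λ ν})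

/-- `ν` is a minimal extrapolation of `μ` from `Λ`, i.e. `ν ∈ 𝓔(μ,Λ)`:
an extrapolation whose total variation norm equals `ε(μ,Λ)`. -/
def IsMinimalExtrapolation {d : ℕ} (μ : TorusMeasure d) (Λ : Finset (Fin d → ℤ))
    (ν : TorusMeasure d) : Prop :=
  IsExtrapolation μ Λ ν ∧ ‖ν‖ = minExtNorm μ Λ

/-- `Γ(μ,Λ) = {m ∈ Λ : |μ̂(m)| = ε(μ,Λ)}`. -/
def gammaSet {d : ℕ} (μ : TorusMeasure d) (Λ : Finset (Fin d → ℤ)) : Set (Fin d → ℤ) :=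
  {m | m ∈ Λ ∧ ‖mFourierCoeff μ m‖ = minExtNorm μ Λ}

/-- The measure `ν` is supported in the set `S`: it annihilates every continuous
function vanishing on `S` (for closed `S` this says `supp(ν) ⊆ S`). -/
def SupportedIn {d : ℕ} (ν : TorusMeasure d) (S : Set (Torus d)) : Prop :=
  ∀ f : C(Torus d, ℂ), (∀ x ∈ S, f x = 0) → ν f = 0

/-- The pairing `⟨f,μ⟩ = ∫_{𝕋^d} f(x) conj(dμ(x)) = conj (μ (conj f))`. -/
def mPairing {d : ℕ} (f : C(Torus d, ℂ)) (μ : TorusMeasure d) : ℂ :=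
  starRingEnd ℂ (μ (star f))

/-- `C(𝕋^d;Λ)`: the subspace of trigonometric polynomials
`f(x) = ∑_{m ∈ Λ} a_m e^{2πi m·x}` with frequencies in `Λ`. -/
def trigPoly {d : ℕ} (Λ : Finset (Fin d → ℤ)) : Submodule ℂ C(Torus d, ℂ) :=
  Submodule.span ℂ (torusChar '' (Λ : Set (Fin d → ℤ)))

/-- For a continuous `g` with `‖g‖_∞ ≤ 1`, the assertion that `sign(ν) = g`
`ν`-almost everywhere, expressed through the standard equivalent condition
`⟨g,ν⟩ = ‖ν‖` (obtained by integrating the Radon–Nikodym identity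
`∫ f d|ν| = ∫ f conj(sign ν) dν` against `f = conj g` and using `|ν|(𝕋^d) = ‖ν‖`). -/
def SignEqAE {d : ℕ} (ν : TorusMeasure d) (g : C(Torus d, ℂ)) : Prop :=
  mPairing g ν = (‖ν‖ : ℂ)

/-- `ν` is a positive measure: it takes nonnegative real values on nonnegative real-valued
continuous functions. -/
def IsPositiveMeasure {d : ℕ} (ν : TorusMeasure d) : Prop :=
  ∀ f : C(Torus d, ℂ), (∀ x, (f x).im = 0 ∧ 0 ≤ (f x).re) → (ν f).im = 0 ∧ 0 ≤ (ν f).re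

/-- The Dirac measure `δ_x`: evaluation at `x`. -/
def diracM {d : ℕ} (x : Torus d) : TorusMeasure d :=
  ContinuousMap.evalCLM ℂ x

/-- The modulation `M_n ν`, defined by `d(M_n ν)(x) = e^{2πi n·x} dν(x)`. -/
def modulateM {d : ℕ} (n : Fin d → ℤ) (ν : TorusMeasure d) : TorusMeasure d :=
  ν.comp (ContinuousLinearMap.mul ℂ C(Torus d, ℂ) (torusChar n))

/-! For `Λ = {0}` only the total mass is constrained and `|σ̂(0)| ≤ ‖σ‖`, so every `δ_y` is a
minimal extrapolation of `δ_x`, and negation preserves minimal extrapolations. Hence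
`δ_0 ∈ 𝓔(δ_0, Λ)` and `-δ_{1/2} ∈ 𝓔(-δ_0, Λ)`, while `μ₁ + μ₂ = 0` has `0` as its only minimal
extrapolation and `δ_0 - δ_{1/2} ≠ 0`, Dirac measures being separated by the characters. -/

section Extrapolation

variable {d : ℕ} {μ ν : TorusMeasure d} {Λ : Finset (Fin d → ℤ)}

lemma norm_torusChar_le (m : Fin d → ℤ) : ‖torusChar m‖ ≤ 1 :=
  (ContinuousMap.norm_le _ zero_le_one).mpr fun x => by
    simp [torusChar, Circle.norm_coe]

lemma norm_mFourierCoeff_le (μ : TorusMeasure d) (m : Fin d → ℤ) :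
    ‖mFourierCoeff μ m‖ ≤ ‖μ‖ :=
  (μ.le_of_opNorm_le le_rfl (torusChar (-m))).trans
    (mul_le_of_le_one_right (norm_nonneg μ) (norm_torusChar_le (-m)))

lemma minExtNorm_le_norm (h : IsExtrapolation μ Λ ν) : minExtNorm μ Λ ≤ ‖ν‖ :=
  csInf_le ⟨0, by rintro _ ⟨σ, -, rfl⟩; exact norm_nonneg σ⟩ ⟨ν, h, rfl⟩

lemma norm_mFourierCoeff_le_minExtNorm {m : Fin d → ℤ} (hm : m ∈ Λ) :
    ‖mFourierCoeff μ m‖ ≤ minExtNorm μ Λ := by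
  refine le_csInf ⟨‖μ‖, μ, fun _ _ => rfl, rfl⟩ ?_
  rintro _ ⟨σ, hσ, rfl⟩
  exact hσ m hm ▸ norm_mFourierCoeff_le σ m

lemma IsExtrapolation.isMinimalExtrapolation_of_norm_le {m : Fin d → ℤ}
    (h : IsExtrapolation μ Λ ν) (hm : m ∈ Λ) (hν : ‖ν‖ ≤ ‖mFourierCoeff μ m‖) :
    IsMinimalExtrapolation μ Λ ν :=
  ⟨h, (minExtNorm_le_norm h).antisymm' (hν.trans (norm_mFourierCoeff_le_minExtNorm hm))⟩

lemma IsExtrapolation.neg (h : IsExtrapolation μ Λ ν) : IsExtrapolation (-μ) Λ (-ν) :=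
  fun m hm => congrArg Neg.neg (h m hm)

lemma minExtNorm_neg (μ : TorusMeasure d) (Λ : Finset (Fin d → ℤ)) :
    minExtNorm (-μ) Λ = minExtNorm μ Λ := by
  unfold minExtNorm
  congr 1
  ext r
  constructor
  · rintro ⟨ν, hν, rfl⟩
    exact ⟨-ν, by simpa using hν.neg, norm_neg ν⟩
  · rintro ⟨ν, hν, rfl⟩
    exact ⟨-ν, hν.neg, norm_neg ν⟩

lemma IsMinimalExtrapolation.neg (h : IsMinimalExtrapolation μ Λ ν) :
    IsMinimalExtrapolation (-μ) Λ (-ν) :=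
  ⟨h.1.neg, by rw [norm_neg, minExtNorm_neg, h.2]⟩

lemma IsMinimalExtrapolation.eq_zero_of_zero (h : IsMinimalExtrapolation 0 Λ ν) : ν = 0 := by
  have hle : minExtNorm (0 : TorusMeasure d) Λ ≤ 0 := by
    simpa using minExtNorm_le_norm (μ := 0) (Λ := Λ) (fun _ _ => rfl)
  exact (ContinuousLinearMap.opNorm_zero_iff ν).mp ((h.2.trans_le hle).antisymm (norm_nonneg ν))

end Extrapolation

section Dirac

variable {d : ℕ}

lemma norm_diracM (x : Torus d) : ‖diracM x‖ = 1 := by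
  refine le_antisymm (ContinuousLinearMap.opNorm_le_bound _ zero_le_one fun f => ?_) ?_
  · simpa [diracM] using f.norm_coe_le_norm x
  · simpa [diracM] using (diracM x).le_opNorm 1

lemma diracM_injective : Function.Injective (diracM (d := d)) := by
  intro x y hxy
  by_contra hne
  obtain ⟨_, ⟨f, -, rfl⟩, hf⟩ := UnitAddTorus.mFourierSubalgebra_separatesPoints hne
  exact hf (congrArg (· f) hxy)

lemma mFourierCoeff_diracM_zero (x : Torus d) : mFourierCoeff (diracM x) 0 = 1 := by
  simp [mFourierCoeff, diracM, torusChar]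

lemma isMinimalExtrapolation_diracM (x y : Torus d) :
    IsMinimalExtrapolation (diracM x) {0} (diracM y) := by
  refine IsExtrapolation.isMinimalExtrapolation_of_norm_le ?_ (Finset.mem_singleton_self 0) ?_
  · intro m hm
    rw [Finset.mem_singleton.mp hm, mFourierCoeff_diracM_zero, mFourierCoeff_diracM_zero]
  · rw [mFourierCoeff_diracM_zero, norm_diracM, norm_one]

end Dirac

lemma half_ne_zero_addCircle : ((1 / 2 : ℝ) : AddCircle (1 : ℝ)) ≠ 0 := by
  rw [Ne, AddCircle.coe_eq_zero_of_pos_iff (1 : ℝ) one_pos (by norm_num)]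
  rintro ⟨_ | _ | n, hn⟩ <;> simp at hn; linarith

/-- **Proposition 2.8(a).** Minimal extrapolation is not additive: there are
`μ₁, μ₂ ∈ M(𝕋)`, a finite `Λ ⊂ ℤ`, and `ν₁ ∈ 𝓔(μ₁,Λ)`, `ν₂ ∈ 𝓔(μ₂,Λ)` with
`ν₁ + ν₂ ∉ 𝓔(μ₁ + μ₂, Λ)`. -/
theorem minimalExtrapolation_not_additive :
    ∃ (μ₁ μ₂ : TorusMeasure 1) (Λ : Finset (Fin 1 → ℤ)) (ν₁ ν₂ : TorusMeasure 1),
      IsMinimalExtrapolation μ₁ Λ ν₁ ∧ IsMinimalExtrapolation μ₂ Λ ν₂ ∧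
      ¬ IsMinimalExtrapolation (μ₁ + μ₂) Λ (ν₁ + ν₂) := by
  let x₀ : Torus 1 := fun _ => 0
  let x₁ : Torus 1 := fun _ => ((1 / 2 : ℝ) : AddCircle (1 : ℝ))
  refine ⟨diracM x₀, -diracM x₀, {0}, diracM x₀, -diracM x₁, isMinimalExtrapolation_diracM _ _,
    (isMinimalExtrapolation_diracM _ _).neg, fun h => ?_⟩
  rw [add_neg_cancel] at h
  have hx : x₀ = x₁ := diracM_injective (add_neg_eq_zero.mp h.eq_zero_of_zero)
  exact half_ne_zero_addCircle (congrFun hx 0).symm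

end
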